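/- For all natural numbers n and k with k ≤ n, the k-th derivative of the Legendre polynomial of degree n lies in the real linear span of the Legendre polynomials of the same parity below degree n−k: d^k/dx^k P_n ∈ span_ℝ { P_{n−k−2i} : 0 ≤ i ≤ ⌊(n−k)/2⌋ }. -/
import Mathlib

open Polynomial

/-- Legendre polynomial via Rodrigues' formula. -/
noncomputable def legendre (n : ℕ) : ℝ → ℝ :=
  fun x => (1 / (2 ^ n * (n.factorial : ℝ))) * iteratedDeriv n (fun y => (y ^ 2 - 1) ^ n) x

/-- parity/degree predicate -/
def Par (p : ℝ[X]) (e : ℕ) : Prop := ∀ j, p.coeff j ≠ 0 → j ≤ e ∧ j % 2 = e % 2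

noncomputable def W (m : ℕ) : ℝ[X] := derivative^[m] ((X ^ 2 - 1) ^ m)

lemma iteratedDeriv_eval (k : ℕ) (p : ℝ[X]) :
    iteratedDeriv k (fun x => p.eval x) = fun x => (derivative^[k] p).eval x := by
  induction k generalizing p with
  | zero => simp
  | succ k ih =>
    rw [iteratedDeriv_succ', Function.iterate_succ_apply]
    rw [← ih (derivative p)]
    have hd : (deriv fun x => p.eval x) = fun x => (derivative p).eval x :=
      funext fun x => p.deriv
    rw [hd]

lemma par_base (n : ℕ) : Par ((X ^ 2 - 1 : ℝ[X]) ^ n) (2 * n) := by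
  induction n with
  | zero =>
    intro j hj
    simp only [pow_zero, Polynomial.coeff_one] at hj
    by_cases h : j = 0 <;> simp [h] at hj ⊢
  | succ n ih =>
    intro j hj
    have hrw : ((X ^ 2 - 1 : ℝ[X]) ^ (n + 1)) = ((X ^ 2 - 1) ^ n) * X ^ 2 - ((X ^ 2 - 1) ^ n) := by
      ring
    rw [hrw, Polynomial.coeff_sub, Polynomial.coeff_mul_X_pow'] at hj
    have key : (2 ≤ j ∧ ((X ^ 2 - 1 : ℝ[X]) ^ n).coeff (j - 2) ≠ 0) ∨
        ((X ^ 2 - 1 : ℝ[X]) ^ n).coeff j ≠ 0 := by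
      by_contra hc
      push_neg at hc
      obtain ⟨h1, h2⟩ := hc
      apply hj
      by_cases h3 : 2 ≤ j
      · rw [if_pos h3, h1 h3, h2, sub_zero]
      · rw [if_neg h3, h2, sub_zero]
    rcases key with ⟨h2j, ha⟩ | ha
    · have := ih _ ha; omega
    · have := ih _ ha; omega

lemma par_iter (p : ℝ[X]) (e m : ℕ) (hp : Par p e) (hm : m ≤ e) :
    Par (derivative^[m] p) (e - m) := by
  intro j hj
  rw [Polynomial.coeff_iterate_derivative] at hj
  have h1 : p.coeff (j + m) ≠ 0 := by
    intro h
    rw [h] at hj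
    simp at hj
  have := hp _ h1
  omega

lemma coeff_W (m : ℕ) : (W m).coeff m = ((2 * m).descFactorial m : ℝ) := by
  rw [W, Polynomial.coeff_iterate_derivative]
  have hmonic : ((X ^ 2 - 1 : ℝ[X])).Monic := by
    have := monic_X_pow_sub_C (1 : ℝ) (two_ne_zero)
    simpa using this
  have hdeg : ((X ^ 2 - 1 : ℝ[X]) ^ m).natDegree = 2 * m := by
    rw [Polynomial.natDegree_pow]
    have h2 : (X ^ 2 - 1 : ℝ[X]).natDegree = 2 := by
      have := natDegree_X_pow_sub_C (n := 2) (r := (1 : ℝ))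
      simpa using this
    rw [h2]; omega
  have hc : ((X ^ 2 - 1 : ℝ[X]) ^ m).coeff (m + m) = 1 := by
    have := (hmonic.pow m).coeff_natDegree
    rwa [hdeg, show 2 * m = m + m by omega] at this
  rw [hc, show m + m = 2 * m by omega]
  simp

lemma par_W (m : ℕ) : Par (W m) m := by
  have := par_iter _ (2 * m) m (par_base m) (by omega)
  simpa [W, show 2 * m - m = m by omega] using this

lemma coeff_W_ne (m : ℕ) : (W m).coeff m ≠ 0 := by
  rw [coeff_W]
  refine Nat.cast_ne_zero.mpr fun h => ?_
  have := Nat.descFactorial_eq_zero_iff_lt.mp h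
  omega

lemma par_mem_span (d : ℕ) (p : ℝ[X]) (hp : Par p d) :
    p ∈ Submodule.span ℝ {q : ℝ[X] | ∃ i : ℕ, i ≤ d / 2 ∧ q = W (d - 2 * i)} := by
  induction d using Nat.strong_induction_on generalizing p with
  | _ d ih =>
    set a : ℝ := p.coeff d / (W d).coeff d with ha
    have hWmem : W d ∈ Submodule.span ℝ {q : ℝ[X] | ∃ i : ℕ, i ≤ d / 2 ∧ q = W (d - 2 * i)} :=
      Submodule.subset_span ⟨0, by omega, by simp⟩
    have hp' : ∀ j, (p - Polynomial.C a * W d).coeff j ≠ 0 → j ≤ d ∧ j % 2 = d % 2 ∧ j ≠ d := by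
      intro j hj
      rw [Polynomial.coeff_sub, Polynomial.coeff_C_mul] at hj
      constructor
      · by_cases h1 : p.coeff j ≠ 0
        · exact (hp _ h1).1
        · push_neg at h1
          have h2 : (W d).coeff j ≠ 0 := by
            intro h
            apply hj
            rw [h1, h, mul_zero, sub_zero]
          exact (par_W d _ h2).1
      constructor
      · by_cases h1 : p.coeff j ≠ 0
        · exact (hp _ h1).2
        · push_neg at h1
          have h2 : (W d).coeff j ≠ 0 := by
            intro h
            apply hj
            rw [h1, h, mul_zero, sub_zero]
          exact (par_W d _ h2).2
      · intro hjd
        subst hjd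
        apply hj
        rw [ha, div_mul_cancel₀ _ (coeff_W_ne j), sub_self]
    rcases Nat.lt_or_ge d 2 with hd | hd
    · -- p - C a * W d = 0
      have hz : p - Polynomial.C a * W d = 0 := by
        ext j
        by_contra hc
        have := hp' j (by simpa using hc)
        omega
      have : p = Polynomial.C a * W d := by linear_combination (norm := ring_nf) hz
      rw [this, ← smul_eq_C_mul]
      exact Submodule.smul_mem _ _ hWmem
    · have hpar : Par (p - Polynomial.C a * W d) (d - 2) := by
        intro j hj
        have := hp' j hj
        omega
      have hmem := ih (d - 2) (by omega) _ hpar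
      have hsub : {q : ℝ[X] | ∃ i : ℕ, i ≤ (d - 2) / 2 ∧ q = W (d - 2 - 2 * i)} ⊆
          {q : ℝ[X] | ∃ i : ℕ, i ≤ d / 2 ∧ q = W (d - 2 * i)} := by
        rintro q ⟨i, hi, rfl⟩
        exact ⟨i + 1, by omega, by congr 1; omega⟩
      have hmem' := Submodule.span_mono hsub hmem
      have : p = (p - Polynomial.C a * W d) + Polynomial.C a * W d := by ring
      rw [this]
      exact Submodule.add_mem _ hmem' (by rw [← smul_eq_C_mul]; exact Submodule.smul_mem _ _ hWmem)

noncomputable def E : ℝ[X] →ₗ[ℝ] (ℝ → ℝ) where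
  toFun p := fun x => p.eval x
  map_add' p q := by funext x; simp
  map_smul' c p := by funext x; simp

lemma legendre_eq (m : ℕ) :
    legendre m = fun x => (Polynomial.C (1 / (2 ^ m * (m.factorial : ℝ))) * W m).eval x := by
  funext x
  have h : (fun y : ℝ => (y ^ 2 - 1) ^ m) = fun y => ((X ^ 2 - 1 : ℝ[X]) ^ m).eval y := by
    funext y; simp
  rw [legendre, h, iteratedDeriv_eval]
  simp [W]

theorem legendre_iteratedDeriv_mem_span (n k : ℕ) (hk : k ≤ n) :
    iteratedDeriv k (legendre n) ∈
      Submodule.span ℝ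
        {g : ℝ → ℝ | ∃ i : ℕ, i ≤ (n - k) / 2 ∧ g = legendre (n - k - 2 * i)} := by
  set c : ℝ := 1 / (2 ^ n * (n.factorial : ℝ)) with hc
  set q : ℝ[X] := derivative^[k + n] ((X ^ 2 - 1) ^ n) with hq
  have hrepr : iteratedDeriv k (legendre n) = E (Polynomial.C c * q) := by
    rw [legendre_eq, iteratedDeriv_eval]
    show _ = fun x => (Polynomial.C c * q).eval x
    rw [Polynomial.iterate_derivative_C_mul, hq, W, ← Function.iterate_add_apply]
  have hpar : Par q (n - k) := by
    have := par_iter _ (2 * n) (k + n) (par_base n) (by omega)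
    rwa [show 2 * n - (k + n) = n - k by omega] at this
  have hqmem : Polynomial.C c * q ∈
      Submodule.span ℝ {p : ℝ[X] | ∃ i : ℕ, i ≤ (n - k) / 2 ∧ p = W (n - k - 2 * i)} := by
    rw [← smul_eq_C_mul]
    exact Submodule.smul_mem _ _ (par_mem_span _ _ hpar)
  rw [hrepr]
  have hmap := Submodule.mem_map_of_mem (f := E) hqmem
  rw [Submodule.map_span] at hmap
  refine Submodule.span_le.mpr ?_ hmap
  rintro _ ⟨p, ⟨i, hi, rfl⟩, rfl⟩
  set m' : ℕ := n - k - 2 * i with hm'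
  set c' : ℝ := 1 / (2 ^ m' * (m'.factorial : ℝ)) with hc'
  have hc'ne : c' ≠ 0 := by
    rw [hc']
    positivity
  have hle : legendre m' = c' • E (W m') := by
    rw [legendre_eq]
    funext x
    simp [E, c']
  have hEW : E (W m') = c'⁻¹ • legendre m' := by
    rw [hle, smul_smul, inv_mul_cancel₀ hc'ne, one_smul]
  rw [hEW]
  exact Submodule.smul_mem _ _ (Submodule.subset_span ⟨i, hi, rfl⟩)
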